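/- Let L be the operator sending a function f to the derivative of (sec·f), i.e. L(f)(x) = d/dx (sec(x)·f(x)). Then for every natural number n ≥ 0 and every real x with cos(x) ≠ 0, L^n(tan)(x) = ∑_{k=0}^{⌊(n+1)/2⌋} n! · C(n+1, 2k) · tan(x)^{n−2k+1} · sec(x)^{n+2k}. -/

import Mathlib

/-!
Write `t = tan` and `s = sec`, so that `t' = s²` and `s' = s t`. For `c = ±1` put `r = t + c s`; since
`c² = 1`, one finds `(s r)' = s r²`, hence `(s (s^n r^(n+1)))' = ((s r)^(n+1))' = (n+1) s^(n+1) r^(n+2)`,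
i.e. `L (s^n r^(n+1)) = (n+1) s^(n+1) r^(n+2)` wherever `cos ≠ 0`. As `tan = ((t + s) + (t - s)) / 2`,
linearity gives `L^n tan = n!/2 · s^n ((t + s)^(n+1) + (t - s)^(n+1))`, and expanding the two binomials
the odd powers of `s` cancel, leaving the stated sum.
-/

/-- sec(x) = 1/cos(x). -/
noncomputable def sec (x : ℝ) : ℝ := (Real.cos x)⁻¹

/-- The operator L sending f to the derivative of sec·f. -/
noncomputable def L (f : ℝ → ℝ) : ℝ → ℝ := deriv (fun x => sec x * f x)

open Finset Real Set Filter

theorem Finset.sum_range_succ_eq_sum_range_two_mul {M : Type*} [AddCommMonoid M] {f : ℕ → M}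
    (hf : ∀ i, Odd i → f i = 0) (m : ℕ) :
    ∑ i ∈ range (m + 1), f i = ∑ k ∈ range (m / 2 + 1), f (2 * k) := by
  rw [← sum_image (g := (2 * ·)) (by intro a _ b _ h; simpa using h)]
  refine (sum_subset (fun i hi => ?_) fun i hi hi' => hf i ?_).symm
  · obtain ⟨k, hk, rfl⟩ := mem_image.1 hi
    simp only [mem_range] at hk ⊢
    omega
  · simp only [mem_range, mem_image, not_exists, not_and] at hi hi'
    rw [Nat.odd_iff]
    by_contra
    exact hi' (i / 2) (by omega) (by omega)

theorem add_pow_add_sub_pow {R : Type*} [CommRing R] (a b : R) (m : ℕ) :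
    (a + b) ^ m + (a - b) ^ m =
      2 * ∑ k ∈ range (m / 2 + 1), (m.choose (2 * k) : R) * a ^ (m - 2 * k) * b ^ (2 * k) := by
  rw [add_comm a, sub_eq_neg_add, add_pow, add_pow, ← sum_add_distrib,
    sum_range_succ_eq_sum_range_two_mul, mul_sum]
  · refine sum_congr rfl fun k _ => ?_
    rw [(even_two_mul k).neg_pow]
    ring
  · intro i hi
    rw [hi.neg_pow]
    ring

theorem hasDerivAt_sec {x : ℝ} (hx : cos x ≠ 0) : HasDerivAt sec (sec x * tan x) x := by
  refine ((hasDerivAt_cos x).inv hx).congr_deriv ?_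
  rw [sec, tan_eq_sin_div_cos]
  field_simp

theorem hasDerivAt_tan_eq_sec_sq {x : ℝ} (hx : cos x ≠ 0) : HasDerivAt tan (sec x ^ 2) x := by
  simpa [sec] using hasDerivAt_tan hx

theorem hasDerivAt_sec_mul_tan_add_mul_sec {c x : ℝ} (hc : c ^ 2 = 1) (hx : cos x ≠ 0) :
    HasDerivAt (fun y => sec y * (tan y + c * sec y)) (sec x * (tan x + c * sec x) ^ 2) x := by
  refine ((hasDerivAt_sec hx).fun_mul
    ((hasDerivAt_tan_eq_sec_sq hx).fun_add ((hasDerivAt_sec hx).const_mul c))).congr_deriv ?_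
  linear_combination -sec x ^ 3 * hc

theorem hasDerivAt_pow_sec_mul_tan_add_mul_sec {c x : ℝ} (hc : c ^ 2 = 1) (hx : cos x ≠ 0)
    (n : ℕ) :
    HasDerivAt (fun y => (sec y * (tan y + c * sec y)) ^ (n + 1))
      ((n + 1) * sec x ^ (n + 1) * (tan x + c * sec x) ^ (n + 2)) x := by
  refine ((hasDerivAt_sec_mul_tan_add_mul_sec hc hx).fun_pow (n + 1)).congr_deriv ?_
  rw [Nat.add_sub_cancel, mul_pow]
  push_cast
  ring

noncomputable def iterateLTanClosedForm (n : ℕ) (x : ℝ) : ℝ :=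
  n.factorial / 2 * sec x ^ n * ((tan x + sec x) ^ (n + 1) + (tan x - sec x) ^ (n + 1))

theorem hasDerivAt_sec_mul_iterateLTanClosedForm (n : ℕ) {x : ℝ} (hx : cos x ≠ 0) :
    HasDerivAt (fun y => sec y * iterateLTanClosedForm n y) (iterateLTanClosedForm (n + 1) x) x := by
  have hplus := hasDerivAt_pow_sec_mul_tan_add_mul_sec (c := 1) (by norm_num) hx n
  have hminus := hasDerivAt_pow_sec_mul_tan_add_mul_sec (c := -1) (by norm_num) hx n
  refine ((hplus.fun_add hminus).const_mul (n.factorial / 2 : ℝ)).congr_of_eventuallyEq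
    (.of_forall fun y => ?_) |>.congr_deriv ?_
  · simp only [iterateLTanClosedForm, mul_pow]
    ring
  · simp only [iterateLTanClosedForm, Nat.factorial_succ]
    push_cast
    ring

theorem L_eqOn_of_eqOn {f g g' : ℝ → ℝ} {U : Set ℝ} (hU : IsOpen U) (hfg : EqOn f g U)
    (hg : ∀ x ∈ U, HasDerivAt (fun y => sec y * g y) (g' x) x) : EqOn (L f) g' U := by
  intro x hx
  have hloc : (fun y => sec y * f y) =ᶠ[nhds x] fun y => sec y * g y :=
    eventually_of_mem (hU.mem_nhds hx) fun y hy => by simp only [hfg hy]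
  rw [L, hloc.deriv_eq, (hg x hx).deriv]

theorem iterate_L_tan_eqOn_iterateLTanClosedForm (n : ℕ) :
    EqOn (L^[n] tan) (iterateLTanClosedForm n) {x | cos x ≠ 0} := by
  induction n with
  | zero =>
    intro x _
    rw [Function.iterate_zero_apply, iterateLTanClosedForm, Nat.factorial_zero]
    ring
  | succ n ih =>
    rw [Function.iterate_succ']
    exact L_eqOn_of_eqOn (isOpen_ne_fun continuous_cos continuous_const) ih
      fun x hx => hasDerivAt_sec_mul_iterateLTanClosedForm n hx

theorem iterate_L_tan_explicit (n : ℕ) (x : ℝ) (hx : Real.cos x ≠ 0) :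
    L^[n] Real.tan x =
      ∑ k ∈ Finset.range ((n + 1) / 2 + 1),
        (n.factorial : ℝ) * ((n + 1).choose (2 * k)) *
          Real.tan x ^ (n + 1 - 2 * k) * sec x ^ (n + 2 * k) := by
  rw [iterate_L_tan_eqOn_iterateLTanClosedForm n hx, iterateLTanClosedForm,
    add_pow_add_sub_pow, mul_sum, mul_sum]
  refine sum_congr rfl fun k _ => ?_
  ring
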